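/- Let 0 < p < 1 and let u, v ∈ R^M be vectors such that every entry of v satisfies |v_k|^p ≤ (1/M) Σ_{i=1}^M |u_i|^p. Then ||v||_2^2 ≤ M^{1 - 2/p} ||u||_p^2. -/
import Mathlib

theorem block_l2_sq_le (M : ℕ) (hM : 0 < M) (p : ℝ) (hp0 : 0 < p) (hp1 : p < 1)
    (u v : Fin M → ℝ) (hv : ∀ k, |v k| ^ p ≤ (1 / M) * ∑ i, |u i| ^ p) :
    ∑ k, (v k) ^ 2 ≤
      (M : ℝ) ^ (1 - 2 / p) * ((∑ i, |u i| ^ p) ^ (1 / p)) ^ 2 := by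
  set S : ℝ := ∑ i, |u i| ^ p with hS
  have hS0 : 0 ≤ S := Finset.sum_nonneg fun i _ =>
    Real.rpow_nonneg (abs_nonneg _) _
  have hMpos : (0 : ℝ) < M := by exact_mod_cast hM
  have key : ∀ k, (v k) ^ 2 ≤ (S / M) ^ ((2 : ℝ) / p) := by
    intro k
    have h1 : |v k| ^ p ≤ S / M := by
      have := hv k; rw [one_div, inv_mul_eq_div] at this; exact this
    have h2 : (|v k| ^ p) ^ ((2 : ℝ) / p) ≤ (S / M) ^ ((2 : ℝ) / p) :=
      Real.rpow_le_rpow (Real.rpow_nonneg (abs_nonneg _) _) h1 (by positivity)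
    have h3 : (|v k| ^ p) ^ ((2 : ℝ) / p) = (v k) ^ 2 := by
      rw [← Real.rpow_mul (abs_nonneg _)]
      have hpe : p * (2 / p) = 2 := by field_simp
      rw [hpe, Real.rpow_two, sq_abs]
    rw [← h3]; exact h2
  calc ∑ k, (v k) ^ 2 ≤ ∑ _k : Fin M, (S / M) ^ ((2 : ℝ) / p) :=
        Finset.sum_le_sum fun k _ => key k
    _ = M * (S / M) ^ ((2 : ℝ) / p) := by
        rw [Finset.sum_const, Finset.card_univ, Fintype.card_fin, nsmul_eq_mul]
    _ = (M : ℝ) ^ (1 - 2 / p) * (S ^ (1 / p)) ^ 2 := by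
        rw [Real.div_rpow hS0 hMpos.le]
        rw [← Real.rpow_natCast (S ^ (1 / p)) 2, ← Real.rpow_mul hS0]
        rw [Real.rpow_sub hMpos, Real.rpow_one]
        push_cast
        rw [one_div_mul_eq_div, div_eq_mul_inv 2 p]
        ring
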